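/- arXiv:1111.7284 — 3 statements merged into one kernel-verified Lean document; each statement's English description precedes it below -/
import Mathlib

section
/- If 𝔊 is an induced Hoffman subgraph of a Hoffman graph 𝔥, then λ_min(𝔊) ≥ λ_min(𝔥). In particular, if Γ is the slim subgraph of 𝔥 (the subgraph induced on the slim vertices, regarded as a slim Hoffman graph, so that its B-matrix is its ordinary adjacency matrix), then the smallest adjacency eigenvalue of Γ is at least λ_min(𝔥). -/
/-- A Hoffman graph: a finite simple graph whose vertices are labeled slim or fat,
such that fat vertices are pairwise non-adjacent and every fat vertex is adjacent
to at least one slim vertex. -/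
structure HoffmanGraph (V : Type*) where
  adj : V → V → Prop
  symm : ∀ {x y : V}, adj x y → adj y x
  loopless : ∀ x : V, ¬ adj x x
  fat : V → Prop
  fat_slim : ∀ x : V, fat x → ∃ y : V, adj x y ∧ ¬ fat y
  fat_nonadj : ∀ x y : V, fat x → fat y → ¬ adj x y

/-- The smallest eigenvalue of a real matrix (the infimum of its set of real
eigenvalues); for a real symmetric matrix on a nonempty finite index type this is
the least eigenvalue. -/
noncomputable def minEig {n : Type*} [Fintype n] (M : Matrix n n ℝ) : ℝ :=
  sInf {t : ℝ | ∃ v : n → ℝ, v ≠ 0 ∧ M.mulVec v = t • v}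

namespace HoffmanGraph

variable {V : Type*}

/-- The type of slim vertices. -/
abbrev Slim (H : HoffmanGraph V) : Type _ := {x : V // ¬ H.fat x}

/-- The type of fat vertices. -/
abbrev FatV (H : HoffmanGraph V) : Type _ := {x : V // H.fat x}

noncomputable instance (priority := 50) instFintypeSlim [Finite V] {H : HoffmanGraph V} :
    Fintype H.Slim := Fintype.ofFinite _

noncomputable instance (priority := 50) instFintypeFatV [Finite V] {H : HoffmanGraph V} :
    Fintype H.FatV := Fintype.ofFinite _

/-- The set of fat neighbors `N^f(x)` of a vertex. -/
def fatNbrs (H : HoffmanGraph V) (x : V) : Set V := {f | H.fat f ∧ H.adj x f}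

/-- The set of common fat neighbors `N^f(x) ∩ N^f(y)` of two vertices. -/
def commonFat (H : HoffmanGraph V) (x y : V) : Set V :=
  {f | H.fat f ∧ H.adj x f ∧ H.adj y f}

lemma commonFat_comm (H : HoffmanGraph V) (x y : V) :
    H.commonFat x y = H.commonFat y x := by
  ext f; simp only [commonFat, Set.mem_setOf_eq]; tauto

/-- The degree of a vertex. -/
noncomputable def degree (H : HoffmanGraph V) (x : V) : ℕ := {y | H.adj x y}.ncard

/-- The matrix `B(𝔥) = A_s - C Cᵀ`, written entrywise:
`B x y = A_s x y - |N^f(x) ∩ N^f(y)|`. -/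
noncomputable def B (H : HoffmanGraph V) : Matrix H.Slim H.Slim ℝ := by
  classical
  exact Matrix.of fun x y =>
    (if H.adj x.1 y.1 then (1 : ℝ) else 0) - ((H.commonFat x.1 y.1).ncard : ℝ)

/-- `λ_min(𝔥)`: the smallest eigenvalue of `B(𝔥)`. -/
noncomputable def lamMin [Finite V] (H : HoffmanGraph V) : ℝ := minEig H.B

/-- The adjacency matrix of the slim subgraph of `𝔥` (equivalently, the `B`-matrix
of the slim subgraph regarded as a slim Hoffman graph). -/
noncomputable def slimAdjMatrix (H : HoffmanGraph V) : Matrix H.Slim H.Slim ℝ := by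
  classical
  exact Matrix.of fun x y => if H.adj x.1 y.1 then (1 : ℝ) else 0

/-- A Hoffman graph is fat if every slim vertex has a fat neighbor. -/
def IsFat (H : HoffmanGraph V) : Prop :=
  ∀ x : V, ¬ H.fat x → ∃ f : V, H.fat f ∧ H.adj x f

end HoffmanGraph

/-- An embedding exhibiting `G` as an induced Hoffman subgraph of `H`:
an injection preserving adjacency, non-adjacency, and the slim/fat labeling. -/
structure HoffmanEmbedding {V W : Type*} (G : HoffmanGraph V) (H : HoffmanGraph W) where
  toFun : V → W
  inj : Function.Injective toFun
  adj_iff : ∀ x y : V, G.adj x y ↔ H.adj (toFun x) (toFun y)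
  fat_iff : ∀ x : V, G.fat x ↔ H.fat (toFun x)

/-- An isomorphism of Hoffman graphs. -/
structure HoffmanIso {V W : Type*} (G : HoffmanGraph V) (H : HoffmanGraph W) where
  toEquiv : V ≃ W
  adj_iff : ∀ x y : V, G.adj x y ↔ H.adj (toEquiv x) (toEquiv y)
  fat_iff : ∀ x : V, G.fat x ↔ H.fat (toEquiv x)

namespace HoffmanGraph

variable {V : Type*}

/-- The induced Hoffman subgraph on a set `W` of vertices, provided every fat
vertex of `W` keeps a slim neighbor inside `W`. -/
def induce (H : HoffmanGraph V) (W : Finset V)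
    (hW : ∀ y ∈ W, H.fat y → ∃ x ∈ W, ¬ H.fat x ∧ H.adj y x) :
    HoffmanGraph {v : V // v ∈ W} where
  adj x y := H.adj x.1 y.1
  symm := @fun x y h => H.symm h
  loopless x h := H.loopless x.1 h
  fat x := H.fat x.1
  fat_slim x hx := by
    obtain ⟨z, hzW, hz1, hz2⟩ := hW x.1 x.2 hx
    exact ⟨⟨z, hzW⟩, hz2, hz1⟩
  fat_nonadj x y hx hy := H.fat_nonadj x.1 y.1 hx hy

/-- A decomposition of a Hoffman graph `H` into the family of induced Hoffman
subgraphs on the (nonempty) vertex sets `W i`. -/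
structure IsDecomposition (H : HoffmanGraph V) {ι : Type*} (W : ι → Finset V) : Prop where
  nonempty : ∀ i, (W i).Nonempty
  cover : ∀ v : V, ∃ i, v ∈ W i
  slim_disj : ∀ i j, i ≠ j → ∀ x : V, ¬ H.fat x → x ∈ W i → x ∈ W j → False
  fat_closed : ∀ i, ∀ x y : V, x ∈ W i → ¬ H.fat x → H.fat y → H.adj x y → y ∈ W i
  part_fat : ∀ i, ∀ y ∈ W i, H.fat y → ∃ x ∈ W i, ¬ H.fat x ∧ H.adj y x
  cross : ∀ i j, i ≠ j → ∀ x y : V, x ∈ W i → y ∈ W j → ¬ H.fat x → ¬ H.fat y →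
    (H.commonFat x y).ncard ≤ 1 ∧ ((H.commonFat x y).ncard = 1 ↔ H.adj x y)

/-- A Hoffman graph is decomposable if it admits a decomposition into `n ≥ 2` parts. -/
def Decomposable (H : HoffmanGraph V) : Prop :=
  ∃ n : ℕ, 2 ≤ n ∧ ∃ W : Fin n → Finset V, H.IsDecomposition W

/-- `α`-reducibility: `λ_min(H) ≥ α` and there is a Hoffman graph `H'` containing `H`
as an induced Hoffman subgraph together with a decomposition `{𝔥¹, 𝔥²}` of `H'` whose
parts have smallest eigenvalue at least `α` and whose slim vertex sets both meet the
slim vertex set of `H`. -/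
def AlphaReducible [Finite V] (H : HoffmanGraph V) (α : ℝ) : Prop :=
  H.lamMin ≥ α ∧
  ∃ (V' : Type) (_ : Finite V') (H' : HoffmanGraph V') (e : HoffmanEmbedding H H')
    (W : Fin 2 → Finset V') (hD : H'.IsDecomposition W),
    (∀ i, (H'.induce (W i) (hD.part_fat i)).lamMin ≥ α) ∧
    (∀ i, ∃ v : V, ¬ H.fat v ∧ e.toFun v ∈ W i)

/-- `α`-irreducibility: `λ_min(H) ≥ α` and `H` is not `α`-reducible. -/
def AlphaIrreducible [Finite V] (H : HoffmanGraph V) (α : ℝ) : Prop :=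
  H.lamMin ≥ α ∧ ¬ H.AlphaReducible α

end HoffmanGraph

/-- An edge-signed graph: a simple graph whose edge set is partitioned into
`(+)`-edges and `(−)`-edges. -/
structure EdgeSignedGraph (V : Type*) where
  pos : V → V → Prop
  neg : V → V → Prop
  pos_symm : ∀ {x y : V}, pos x y → pos y x
  neg_symm : ∀ {x y : V}, neg x y → neg y x
  pos_irrefl : ∀ x : V, ¬ pos x x
  neg_irrefl : ∀ x : V, ¬ neg x x
  pos_neg : ∀ x y : V, pos x y → neg x y → False

namespace EdgeSignedGraph

variable {V : Type*}

/-- The signed adjacency matrix: `1` on `(+)`-edges, `−1` on `(−)`-edges, `0` otherwise. -/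
noncomputable def M (S : EdgeSignedGraph V) : Matrix V V ℝ := by
  classical
  exact Matrix.of fun x y => if S.pos x y then (1 : ℝ) else if S.neg x y then -1 else 0

/-- The underlying simple graph of an edge-signed graph. -/
def toSimpleGraph (S : EdgeSignedGraph V) : SimpleGraph V where
  Adj x y := S.pos x y ∨ S.neg x y
  symm := ⟨fun x y h => h.elim (fun h => Or.inl (S.pos_symm h)) (fun h => Or.inr (S.neg_symm h))⟩
  loopless := ⟨fun x h => h.elim (S.pos_irrefl x) (S.neg_irrefl x)⟩

/-- `S.HasInduced T`: the edge-signed graph `S` contains an induced edge-signed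
subgraph isomorphic to `T`. -/
def HasInduced {W : Type*} (S : EdgeSignedGraph V) (T : EdgeSignedGraph W) : Prop :=
  ∃ f : W → V, Function.Injective f ∧
    (∀ x y : W, T.pos x y ↔ S.pos (f x) (f y)) ∧
    (∀ x y : W, T.neg x y ↔ S.neg (f x) (f y))

end EdgeSignedGraph

/-- An isomorphism of edge-signed graphs. -/
structure EdgeSignedIso {V W : Type*} (S : EdgeSignedGraph V) (T : EdgeSignedGraph W) where
  toEquiv : V ≃ W
  pos_iff : ∀ x y : V, S.pos x y ↔ T.pos (toEquiv x) (toEquiv y)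
  neg_iff : ∀ x y : V, S.neg x y ↔ T.neg (toEquiv x) (toEquiv y)

/-- The special graph `S(𝔥)` of a Hoffman graph: the edge-signed graph on the slim
vertices where adjacent vertices with no common fat neighbor form a `(+)`-edge, and
non-adjacent vertices with a common fat neighbor form a `(−)`-edge. -/
def HoffmanGraph.special {V : Type*} (H : HoffmanGraph V) : EdgeSignedGraph H.Slim where
  pos x y := H.adj x.1 y.1 ∧ H.commonFat x.1 y.1 = ∅
  neg x y := x ≠ y ∧ ¬ H.adj x.1 y.1 ∧ (H.commonFat x.1 y.1).Nonempty
  pos_symm := @fun x y h => ⟨H.symm h.1, by rw [H.commonFat_comm]; exact h.2⟩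
  neg_symm := @fun x y h =>
    ⟨h.1.symm, fun ha => h.2.1 (H.symm ha), by rw [H.commonFat_comm]; exact h.2.2⟩
  pos_irrefl x h := H.loopless x.1 h.1
  neg_irrefl x h := h.1 rfl
  pos_neg x y hp hn := hn.2.1 hp.1

/-- The edge-signed graph `Q_{p,q,r}`: a `(+)`-clique `V_r = Fin r`, a set
`V_p = Fin p` matched by `(+)`-edges to the first `p` vertices of `V_r`, and a set
`V_q = Fin q` matched by `(−)`-edges to the next `q` vertices of `V_r`. -/
def Q (p q r : ℕ) : EdgeSignedGraph (Fin p ⊕ Fin q ⊕ Fin r) where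
  pos x y :=
    (∃ (i : Fin p) (k : Fin r), x = Sum.inl i ∧ y = Sum.inr (Sum.inr k) ∧ (k : ℕ) = (i : ℕ)) ∨
    (∃ (i : Fin p) (k : Fin r), y = Sum.inl i ∧ x = Sum.inr (Sum.inr k) ∧ (k : ℕ) = (i : ℕ)) ∨
    (∃ (k l : Fin r), x = Sum.inr (Sum.inr k) ∧ y = Sum.inr (Sum.inr l) ∧ k ≠ l)
  neg x y :=
    (∃ (j : Fin q) (k : Fin r),
      x = Sum.inr (Sum.inl j) ∧ y = Sum.inr (Sum.inr k) ∧ (k : ℕ) = p + (j : ℕ)) ∨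
    (∃ (j : Fin q) (k : Fin r),
      y = Sum.inr (Sum.inl j) ∧ x = Sum.inr (Sum.inr k) ∧ (k : ℕ) = p + (j : ℕ))
  pos_symm := @fun x y h => by
    rcases h with ⟨i, k, h1, h2, h3⟩ | ⟨i, k, h1, h2, h3⟩ | ⟨k, l, h1, h2, h3⟩
    · exact Or.inr (Or.inl ⟨i, k, h1, h2, h3⟩)
    · exact Or.inl ⟨i, k, h1, h2, h3⟩
    · exact Or.inr (Or.inr ⟨l, k, h2, h1, h3.symm⟩)
  neg_symm := @fun x y h => by
    rcases h with ⟨j, k, h1, h2, h3⟩ | ⟨j, k, h1, h2, h3⟩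
    · exact Or.inr ⟨j, k, h1, h2, h3⟩
    · exact Or.inl ⟨j, k, h1, h2, h3⟩
  pos_irrefl x h := by
    rcases h with ⟨i, k, h1, h2, h3⟩ | ⟨i, k, h1, h2, h3⟩ | ⟨k, l, h1, h2, h3⟩ <;>
      subst h1 <;> simp_all
  neg_irrefl x h := by
    rcases h with ⟨j, k, h1, h2, h3⟩ | ⟨j, k, h1, h2, h3⟩ <;> subst h1 <;> simp_all
  pos_neg x y hp hn := by
    rcases hp with ⟨i, k, h1, h2, h3⟩ | ⟨i, k, h1, h2, h3⟩ | ⟨k, l, h1, h2, h3⟩ <;>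
      rcases hn with ⟨j, m, g1, g2, g3⟩ | ⟨j, m, g1, g2, g3⟩ <;> subst h1 <;> simp_all

/-- The edge-signed triangle `T₁` with exactly one `(+)`-edge and two `(−)`-edges. -/
def T1 : EdgeSignedGraph (Fin 3) where
  pos x y := (x = 0 ∧ y = 1) ∨ (x = 1 ∧ y = 0)
  neg x y := x ≠ y ∧ (x = 2 ∨ y = 2)
  pos_symm := @fun x y h => by tauto
  neg_symm := @fun x y h => ⟨h.1.symm, h.2.symm⟩
  pos_irrefl x h := by
    rcases h with ⟨h1, h2⟩ | ⟨h1, h2⟩ <;> subst h1 <;> exact absurd h2 (by decide)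
  neg_irrefl x h := h.1 rfl
  pos_neg x y hp hn := by
    rcases hp with ⟨h1, h2⟩ | ⟨h1, h2⟩ <;> subst h1 <;> subst h2 <;>
      exact absurd hn.2 (by decide)

/-- The golden ratio `τ = (1 + √5)/2`. -/
noncomputable def goldenRatio' : ℝ := (1 + Real.sqrt 5) / 2

/-!
Restricting `B(𝔥)` to the slim vertices of `𝔊` gives `B(𝔊) - C'C'ᵀ`, where `C'` records the
adjacencies between slim vertices of `𝔊` and fat vertices of `𝔥` outside `𝔊`; similarly the
adjacency matrix of the slim subgraph is `B(𝔥) + CCᵀ`. Hence `B(𝔊)` dominates a principal submatrix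
of `B(𝔥)` in the Loewner order, and by the Rayleigh principle the smallest eigenvalue can only grow
when passing to a principal submatrix or adding a positive semidefinite matrix.
-/

open Matrix Function
open scoped Pointwise

section SmallestEigenvalue

variable {m n : Type*} [Fintype m] [Fintype n]

theorem Matrix.le_of_mulVec_eq_smul {M : Matrix n n ℝ} {c t : ℝ} {v : n → ℝ} (hv : v ≠ 0)
    (hMv : M *ᵥ v = t • v) (h : c * (v ⬝ᵥ v) ≤ v ⬝ᵥ M *ᵥ v) : c ≤ t := by
  rw [hMv, dotProduct_smul, smul_eq_mul] at h
  have hpos : 0 < v ⬝ᵥ v := lt_of_le_of_ne (Fintype.sum_nonneg fun i => mul_self_nonneg (v i))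
    (Ne.symm (dotProduct_self_eq_zero.not.mpr hv))
  exact le_of_mul_le_mul_right h hpos

theorem Function.Injective.extend_zero_dotProduct {e : m → n} (he : Injective e) (v : m → ℝ)
    (u : n → ℝ) : extend e v 0 ⬝ᵥ u = v ⬝ᵥ (u ∘ e) := by
  refine (Fintype.sum_of_injective e he _ _ (fun z hz => ?_) fun x => ?_).symm
  · rw [extend_apply' _ _ _ (by simpa using hz), Pi.zero_apply, zero_mul]
  · rw [he.extend_apply, Function.comp_apply]

namespace Matrix.IsHermitian

variable {M : Matrix n n ℝ}

theorem mul_dotProduct_self_le [DecidableEq n] (hM : M.IsHermitian) {c : ℝ}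
    (hc : ∀ j, c ≤ hM.eigenvalues j) (v : n → ℝ) : c * (v ⬝ᵥ v) ≤ v ⬝ᵥ M *ᵥ v := by
  have hsub : (M - c • 1).IsHermitian := hM.sub (isHermitian_one.smul (IsSelfAdjoint.all c))
  have hpsd : (M - c • 1).PosSemidef := by
    refine hsub.posSemidef_iff_eigenvalues_nonneg.mpr fun j => ?_
    have hj : hsub.eigenvalues j ∈ spectrum ℝ M - ({c} : Set ℝ) := by
      rw [spectrum.sub_singleton_eq, Algebra.algebraMap_eq_smul_one]
      exact hsub.eigenvalues_mem_spectrum_real j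
    rw [hM.spectrum_real_eq_range_eigenvalues, Set.sub_singleton] at hj
    obtain ⟨_, ⟨i, rfl⟩, hi⟩ := hj
    simpa [← hi] using hc i
  have := hpsd.dotProduct_mulVec_nonneg v
  rw [star_trivial, sub_mulVec, smul_mulVec, one_mulVec, dotProduct_sub, dotProduct_smul,
    smul_eq_mul] at this
  linarith

theorem le_minEig_iff [Nonempty n] (hM : M.IsHermitian) {c : ℝ} :
    c ≤ minEig M ↔ ∀ v : n → ℝ, c * (v ⬝ᵥ v) ≤ v ⬝ᵥ M *ᵥ v := by
  classical
  obtain ⟨i, -, hi⟩ := Finset.univ.exists_min_image hM.eigenvalues Finset.univ_nonempty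
  have hrayleigh := hM.mul_dotProduct_self_le fun j => hi j (Finset.mem_univ j)
  have hb : (hM.eigenvectorBasis i : n → ℝ) ≠ 0 :=
    (WithLp.ofLp_eq_zero 2).not.mpr (hM.eigenvectorBasis.orthonormal.ne_zero i)
  have hmin : minEig M = hM.eigenvalues i := by
    refine IsLeast.csInf_eq ⟨⟨_, hb, hM.mulVec_eigenvectorBasis i⟩, ?_⟩
    rintro t ⟨v, hv, hMv⟩
    exact le_of_mulVec_eq_smul hv hMv (hrayleigh v)
  rw [hmin]
  refine ⟨fun hc v => ?_, fun h => le_of_mulVec_eq_smul hb (hM.mulVec_eigenvectorBasis i) (h _)⟩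
  exact (mul_le_mul_of_nonneg_right hc (Fintype.sum_nonneg fun j => mul_self_nonneg (v j))).trans
    (hrayleigh v)

theorem minEig_le_minEig_of_posSemidef_sub [Nonempty n] {N : Matrix n n ℝ}
    (hM : M.IsHermitian) (hN : N.IsHermitian) (hNM : (N - M).PosSemidef) :
    minEig M ≤ minEig N := by
  refine hN.le_minEig_iff.mpr fun v => ?_
  have hdiff := hNM.dotProduct_mulVec_nonneg v
  rw [star_trivial, sub_mulVec, dotProduct_sub] at hdiff
  linarith [hM.le_minEig_iff.mp le_rfl v]

/-- The easy half of Cauchy interlacing. -/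
theorem minEig_le_minEig_submatrix [Nonempty m] (hM : M.IsHermitian) {e : m → n}
    (he : Injective e) : minEig M ≤ minEig (M.submatrix e e) := by
  have : Nonempty n := ‹Nonempty m›.map e
  refine (hM.submatrix e).le_minEig_iff.mpr fun v => ?_
  set w := extend e v 0
  have hw : w ∘ e = v := funext (he.extend_apply v 0)
  have hww : w ⬝ᵥ w = v ⬝ᵥ v := by rw [he.extend_zero_dotProduct, hw]
  have hwMw : w ⬝ᵥ M *ᵥ w = v ⬝ᵥ M.submatrix e e *ᵥ v := by
    rw [he.extend_zero_dotProduct]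
    congr 1
    ext x
    change M (e x) ⬝ᵥ w = (fun y => M (e x) (e y)) ⬝ᵥ v
    rw [dotProduct_comm, he.extend_zero_dotProduct, dotProduct_comm]
    rfl
  rw [← hww, ← hwMw]
  exact hM.le_minEig_iff.mp le_rfl w

end Matrix.IsHermitian

end SmallestEigenvalue

section SetIncidence

variable {m κ : Type*} [Fintype κ]

noncomputable def setIncidenceMatrix (s : m → Set κ) : Matrix m κ ℝ :=
  of fun x f => (s x).indicator 1 f

theorem setIncidenceMatrix_mul_transpose_apply (s : m → Set κ) (x y : m) :
    (setIncidenceMatrix s * (setIncidenceMatrix s)ᵀ) x y = ((s x ∩ s y).ncard : ℝ) := by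
  classical
  simp only [setIncidenceMatrix, mul_apply, transpose_apply, of_apply]
  simp_rw [← Pi.mul_apply _ _ (_ : κ), ← Set.inter_indicator_one]
  simp only [Set.indicator_apply, Pi.one_apply, Finset.sum_boole, Set.ncard_eq_toFinset_card']
  congr 2
  ext
  simp

end SetIncidence

namespace HoffmanGraph

variable {V : Type*} (H : HoffmanGraph V)

theorem adj_comm (x y : V) : H.adj x y ↔ H.adj y x := ⟨H.symm, H.symm⟩

theorem slimAdjMatrix_isHermitian : H.slimAdjMatrix.IsHermitian := by
  classical
  ext x y
  simp only [slimAdjMatrix, conjTranspose_apply, of_apply, star_trivial]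
  exact if_congr (H.adj_comm _ _) rfl rfl

theorem B_isHermitian : H.B.IsHermitian := by
  classical
  ext x y
  simp only [B, conjTranspose_apply, of_apply, star_trivial, H.commonFat_comm y.1 x.1]
  rw [if_congr (H.adj_comm y.1 x.1) rfl rfl]

theorem fatNbrs_inter_fatNbrs (x y : V) : H.fatNbrs x ∩ H.fatNbrs y = H.commonFat x y := by
  ext f
  simp only [fatNbrs, commonFat, Set.mem_inter_iff, Set.mem_ofPred_eq]
  tauto

theorem slimAdjMatrix_sub_B [Fintype V] :
    H.slimAdjMatrix - H.B = setIncidenceMatrix (fun x : H.Slim => H.fatNbrs x) *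
      (setIncidenceMatrix (fun x : H.Slim => H.fatNbrs x))ᵀ := by
  ext x y
  rw [setIncidenceMatrix_mul_transpose_apply, fatNbrs_inter_fatNbrs]
  simp [slimAdjMatrix, B]

end HoffmanGraph

namespace HoffmanEmbedding

variable {W V : Type*} {G : HoffmanGraph W} {H : HoffmanGraph V} (e : HoffmanEmbedding G H)

def slimEmbedding : G.Slim ↪ H.Slim where
  toFun x := ⟨e.toFun x, fun h => x.2 ((e.fat_iff x).mpr h)⟩
  inj' _ _ h := Subtype.ext (e.inj (congrArg Subtype.val h))

theorem slimEmbedding_apply_coe (x : G.Slim) : (e.slimEmbedding x : V) = e.toFun x := rfl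

theorem mem_commonFat_iff {x y g : W} :
    e.toFun g ∈ H.commonFat (e.toFun x) (e.toFun y) ↔ g ∈ G.commonFat x y := by
  simp only [HoffmanGraph.commonFat, Set.mem_ofPred_eq, e.fat_iff, e.adj_iff]

theorem commonFat_inter_range (x y : W) :
    H.commonFat (e.toFun x) (e.toFun y) ∩ Set.range e.toFun = e.toFun '' G.commonFat x y := by
  ext f
  constructor
  · rintro ⟨hf, g, rfl⟩
    exact ⟨g, e.mem_commonFat_iff.mp hf, rfl⟩
  · rintro ⟨g, hg, rfl⟩
    exact ⟨e.mem_commonFat_iff.mpr hg, g, rfl⟩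

theorem ncard_commonFat [Finite V] (x y : W) :
    (H.commonFat (e.toFun x) (e.toFun y)).ncard =
      (G.commonFat x y).ncard +
        (H.commonFat (e.toFun x) (e.toFun y) \ Set.range e.toFun).ncard := by
  rw [← Set.ncard_inter_add_ncard_sdiff_eq_ncard _ (Set.range e.toFun), commonFat_inter_range,
    Set.ncard_image_of_injective _ e.inj]

theorem B_sub_submatrix_B [Fintype V] :
    G.B - H.B.submatrix e.slimEmbedding e.slimEmbedding =
      setIncidenceMatrix (fun x : G.Slim => H.fatNbrs (e.toFun x) \ Set.range e.toFun) *
      (setIncidenceMatrix (fun x : G.Slim => H.fatNbrs (e.toFun x) \ Set.range e.toFun))ᵀ := by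
  classical
  ext x y
  have hdiff : ∀ a b : V,
      (H.fatNbrs a \ Set.range e.toFun) ∩ (H.fatNbrs b \ Set.range e.toFun) =
        H.commonFat a b \ Set.range e.toFun := by
    intro a b
    rw [← H.fatNbrs_inter_fatNbrs]
    ext f
    simp only [Set.mem_inter_iff, Set.mem_sdiff]
    tauto
  have hcard : ((H.commonFat (e.toFun x) (e.toFun y)).ncard : ℝ) =
      (G.commonFat x y).ncard + (H.commonFat (e.toFun x) (e.toFun y) \ Set.range e.toFun).ncard :=
    mod_cast e.ncard_commonFat x y
  rw [setIncidenceMatrix_mul_transpose_apply, hdiff, eq_sub_iff_add_eq'.mpr hcard.symm]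
  simp only [Matrix.sub_apply, submatrix_apply, HoffmanGraph.B, of_apply, slimEmbedding_apply_coe]
  by_cases hxy : G.adj x y
  · simp [hxy, (e.adj_iff x y).mp hxy]
  · simp [hxy, (e.adj_iff x y).not.mp hxy, neg_add_eq_sub]

end HoffmanEmbedding

/-- If `G` is an induced Hoffman subgraph of a Hoffman graph `H`,
then `λ_min(G) ≥ λ_min(H)`; in particular the smallest adjacency eigenvalue of the
slim subgraph of `H` is at least `λ_min(H)`. -/
theorem statement1 {W V : Type*} [Fintype W] [Fintype V]
    (G : HoffmanGraph W) (H : HoffmanGraph V)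
    (e : HoffmanEmbedding G H) (hG : Nonempty G.Slim) :
    G.lamMin ≥ H.lamMin ∧ minEig H.slimAdjMatrix ≥ H.lamMin := by
  have : Nonempty H.Slim := hG.map e.slimEmbedding
  refine ⟨?_, ?_⟩
  · calc H.lamMin ≤ minEig (H.B.submatrix e.slimEmbedding e.slimEmbedding) :=
          H.B_isHermitian.minEig_le_minEig_submatrix e.slimEmbedding.injective
      _ ≤ G.lamMin := by
          refine (H.B_isHermitian.submatrix _).minEig_le_minEig_of_posSemidef_sub
            G.B_isHermitian ?_
          rw [e.B_sub_submatrix_B]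
          exact posSemidef_self_mul_conjTranspose _
  · refine H.B_isHermitian.minEig_le_minEig_of_posSemidef_sub H.slimAdjMatrix_isHermitian ?_
    rw [H.slimAdjMatrix_sub_B]
    exact posSemidef_self_mul_conjTranspose _
end

section
/- For every integer r ≥ 1, the characteristic polynomial of the signed adjacency matrix of Q_{r,r,2r} is det(xI − M(Q_{r,r,2r})) = (x² + x − 1)^{2r−1} · (x² − (2r−1)x − 1). -/
/-!
Order the vertices as `V_r ⊔ V_r` followed by the clique `V_{2r}`, so that
`M = [[0, B], [Bᵀ, J - I]]` with `B` the signed matching, which satisfies `BᵀB = I`. As the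
top-left block of `xI - M` is the scalar `x`, a Schur complement gives
`det (xI - M) = det (x(xI - J + I) - I) = det ((x² + x - 1)I - xJ)`, and `det (cI - tJ) =
c^(n-1) (c - n t)` in size `n`. Both determinant identities hold over any commutative ring once
multiplied through by a power of the scalar; the scalars `x` and `x² + x - 1` are then cancelled
in the domain `ℝ[X]`.
-/

open Matrix Polynomial

namespace Matrix

variable {R : Type*} [CommRing R] {m n : Type*} [Fintype m] [Fintype n] [DecidableEq m]
  [DecidableEq n]

theorem pow_card_mul_det_fromBlocks_smul_one₁₁ (a : R) (B : Matrix m n R) (C : Matrix n m R)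
    (D : Matrix n n R) :
    a ^ Fintype.card n * (fromBlocks (a • 1) B C D).det =
      a ^ Fintype.card m * (a • D - C * B).det := by
  have h : fromBlocks (a • 1) B C D * fromBlocks 1 (-B) 0 (a • 1) =
      fromBlocks (a • 1) 0 C (a • D - C * B) := by
    simp [fromBlocks_multiply, sub_eq_add_neg, add_comm]
  have hdet := congrArg det h
  rw [det_mul, det_fromBlocks_zero₂₁, det_fromBlocks_zero₁₂] at hdet
  simpa [det_smul, mul_comm] using hdet

theorem mul_det_smul_one_sub_of_const (c t : R) :
    c * (c • (1 : Matrix n n R) - of fun _ _ => t).det =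
      c ^ Fintype.card n * (c - Fintype.card n * t) := by
  let u : Matrix n Unit R := of fun _ _ => t
  let v : Matrix Unit n R := of fun _ _ => 1
  have h := pow_card_mul_det_fromBlocks_smul_one₁₁ c u v 1
  have huv : u * v = of fun _ _ => t := by
    ext; simp [u, v, mul_apply]
  have hvu : (c • 1 - v * u).det = c - Fintype.card n * t := by
    simp [u, v, mul_apply, det_unique]
  rwa [det_fromBlocks_one₂₂, huv, hvu, Fintype.card_unit, pow_one] at h

theorem charpoly_fromBlocks_zero₁₁ [IsDomain R] (B : Matrix m n R) (C : Matrix n m R)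
    (D : Matrix n n R) (h : Fintype.card m = Fintype.card n) :
    (fromBlocks 0 B C D).charpoly =
      ((X : R[X]) • D.charmatrix - (C * B).map Polynomial.C).det := by
  have key := pow_card_mul_det_fromBlocks_smul_one₁₁ (X : R[X]) (-B.map Polynomial.C)
    (-C.map Polynomial.C) D.charmatrix
  rw [h, Matrix.neg_mul, Matrix.mul_neg, neg_neg, ← Matrix.map_mul] at key
  rw [charpoly, charmatrix_fromBlocks, charmatrix_zero, scalar_apply, ← smul_one_eq_diagonal]
  exact mul_left_cancel₀ (pow_ne_zero _ X_ne_zero) key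

theorem X_smul_charmatrix_allOnes_sub_one_sub_one :
    (X : R[X]) • (of (fun _ _ => 1) - 1 : Matrix n n R).charmatrix - 1 =
      (X ^ 2 + X - 1 : R[X]) • (1 : Matrix n n R[X]) - of fun _ _ => X := by
  ext i j : 1
  by_cases h : i = j
  · subst h
    simp only [sub_apply, smul_apply, charmatrix_apply_eq, of_apply, one_apply_eq, sub_self,
      map_zero, sub_zero, smul_eq_mul, mul_one]
    ring
  · simp [h, charmatrix_apply_ne]

end Matrix

/-- The `(+)`-matching of `V_p` and the `(−)`-matching of `V_q` onto `V_{p+q} = U_p ⊔ U_q`. -/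
def signedMatching (p q : ℕ) : Matrix (Fin p ⊕ Fin q) (Fin (p + q)) ℝ :=
  (diagonal (Sum.elim 1 (-1)) : Matrix (Fin p ⊕ Fin q) (Fin p ⊕ Fin q) ℝ) *
    (1 : Matrix (Fin (p + q)) (Fin (p + q)) ℝ).submatrix finSumFinEquiv id

theorem signedMatching_transpose_mul_self (p q : ℕ) :
    (signedMatching p q)ᵀ * signedMatching p q = 1 := by
  have hsq : diagonal (Sum.elim 1 (-1)) * diagonal (Sum.elim 1 (-1)) =
      (1 : Matrix (Fin p ⊕ Fin q) _ ℝ) := by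
    rw [diagonal_mul_diagonal, ← diagonal_one]
    congr 1; ext (i | j) <;> simp
  rw [signedMatching, Matrix.transpose_mul, transpose_submatrix, transpose_one, diagonal_transpose,
    Matrix.mul_assoc, ← Matrix.mul_assoc (diagonal _), hsq, Matrix.one_mul,
    submatrix_mul_equiv, Matrix.one_mul, submatrix_id_id]

theorem M_Q_eq_reindex (p q : ℕ) :
    (Q p q (p + q)).M = reindex (Equiv.sumAssoc _ _ _) (Equiv.sumAssoc _ _ _)
      (fromBlocks 0 (signedMatching p q) (signedMatching p q)ᵀ (of (fun _ _ => 1) - 1)) := by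
  ext (i | j | k) (i' | j' | k') <;>
    simp [EdgeSignedGraph.M, Q, signedMatching, one_apply] <;>
    split_ifs <;> simp_all [Fin.ext_iff]

theorem charpoly_M_Q (p q : ℕ) :
    (Q p q (p + q)).M.charpoly =
      ((X ^ 2 + X - 1 : ℝ[X]) • (1 : Matrix (Fin (p + q)) (Fin (p + q)) ℝ[X]) -
        of fun _ _ => X).det := by
  rw [M_Q_eq_reindex, charpoly_reindex, charpoly_fromBlocks_zero₁₁ _ _ _ (by simp),
    signedMatching_transpose_mul_self, Matrix.map_one _ Polynomial.C_0 Polynomial.C_1,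
    X_smul_charmatrix_allOnes_sub_one_sub_one]

/-- For `r ≥ 1`, the characteristic polynomial of the signed
adjacency matrix of `Q_{r,r,2r}` is `(x² + x − 1)^(2r−1) · (x² − (2r−1)x − 1)`. -/
theorem statement7 (r : ℕ) (hr : 1 ≤ r) :
    (Q r r (2 * r)).M.charpoly =
      (Polynomial.X ^ 2 + Polynomial.X - 1) ^ (2 * r - 1) *
        (Polynomial.X ^ 2 - Polynomial.C (((2 * r - 1 : ℕ) : ℝ)) * Polynomial.X - 1) := by
  have hc : (X ^ 2 + X - 1 : ℝ[X]) ≠ 0 := fun h => by simpa using congrArg (eval 0) h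
  have key := mul_det_smul_one_sub_of_const (X ^ 2 + X - 1 : ℝ[X]) X (n := Fin (r + r))
  rw [← charpoly_M_Q, ← two_mul, Fintype.card_fin] at key
  apply mul_left_cancel₀ hc
  rw [key, ← mul_assoc, ← pow_succ', Nat.sub_add_cancel (by omega), Nat.cast_sub (by omega),
    map_sub, map_natCast, Nat.cast_one, map_one]
  ring
end

section
/- For every integer r ≥ 1, the smallest eigenvalue of the signed adjacency matrix of Q_{r,r,2r} equals −τ, where τ = (1+√5)/2 is the golden ratio. -/
/-! At a pendant vertex `x` matched to the clique vertex `c` with sign `±1`, an eigenvector `v`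
for `t` satisfies `t v(x) = ±v(c)`; substituted into the equation at `c`, this gives
`(t² + t - 1) v(c) = t S`, where `S` is the sum of `v` over the clique. Below `-φ` the
coefficient `t² + t - 1` is positive while `t` is negative, so summing over the clique forces
`S = 0` and then `v = 0`. At `t = -φ`, a root of `t² + t - 1`, an eigenvector is supported on
one `(+)`-matched and one `(−)`-matched edge. -/

open Matrix Real goldenRatio

theorem Fintype.sum_ite_eq_zero_else {ι : Type*} [Fintype ι] [DecidableEq ι] (k : ι)
    (w : ι → ℝ) : ∑ l, (if k = l then 0 else w l) = ∑ l, w l - w k := by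
  rw [← Finset.sum_erase_add _ _ (Finset.mem_univ k),
    ← Finset.sum_erase_add _ _ (Finset.mem_univ k), if_pos rfl, add_zero, add_sub_cancel_right]
  exact Finset.sum_congr rfl fun l hl => if_neg (Finset.ne_of_mem_erase hl).symm

theorem eq_zero_of_forall_mul_eq_mul_sum {ι : Type*} [Fintype ι] {a b : ℝ} (ha : 0 < a)
    (hb : b ≤ 0) {w : ι → ℝ} (h : ∀ k, a * w k = b * ∑ l, w l) : w = 0 := by
  have hsum : a * ∑ l, w l = Fintype.card ι * b * ∑ l, w l := by
    simp [Finset.mul_sum, h, mul_assoc]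
  have hS : ∑ l, w l = 0 := by
    by_contra hS
    have : a = Fintype.card ι * b := mul_right_cancel₀ hS hsum
    nlinarith [(Fintype.card ι).cast_nonneg (α := ℝ)]
  funext k
  simpa [hS, ha.ne'] using h k

theorem Fin.castAdd_ne_natAdd {m n : ℕ} (i : Fin m) (j : Fin n) : castAdd n i ≠ natAdd m j := by
  simp only [ne_eq, Fin.ext_iff, val_castAdd, val_natAdd]
  omega

namespace Q

variable {p q : ℕ}

lemma M_inl_clique (i : Fin p) (k : Fin (p + q)) :
    (Q p q (p + q)).M (.inl i) (.inr (.inr k)) = if k = Fin.castAdd q i then 1 else 0 := by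
  simp [Q, EdgeSignedGraph.M, Fin.ext_iff (b := Fin.castAdd q i)]

lemma M_clique_inl (i : Fin p) (k : Fin (p + q)) :
    (Q p q (p + q)).M (.inr (.inr k)) (.inl i) = if k = Fin.castAdd q i then 1 else 0 := by
  simp [Q, EdgeSignedGraph.M, Fin.ext_iff (b := Fin.castAdd q i)]

lemma M_inr_inl_clique (j : Fin q) (k : Fin (p + q)) :
    (Q p q (p + q)).M (.inr (.inl j)) (.inr (.inr k)) = if k = Fin.natAdd p j then -1 else 0 := by
  simp [Q, EdgeSignedGraph.M, Fin.ext_iff (b := Fin.natAdd p j)]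

lemma M_clique_inr_inl (j : Fin q) (k : Fin (p + q)) :
    (Q p q (p + q)).M (.inr (.inr k)) (.inr (.inl j)) = if k = Fin.natAdd p j then -1 else 0 := by
  simp [Q, EdgeSignedGraph.M, Fin.ext_iff (b := Fin.natAdd p j)]

lemma M_clique_clique (k l : Fin (p + q)) :
    (Q p q (p + q)).M (.inr (.inr k)) (.inr (.inr l)) = if k = l then 0 else 1 := by
  by_cases h : k = l <;> simp [Q, EdgeSignedGraph.M, h]

variable (v : Fin p ⊕ Fin q ⊕ Fin (p + q) → ℝ)

lemma mulVec_inl (i : Fin p) :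
    ((Q p q (p + q)).M *ᵥ v) (.inl i) = v (.inr (.inr (Fin.castAdd q i))) := by
  simp only [mulVec, dotProduct, Fintype.sum_sum_type, M_inl_clique, ite_mul, one_mul, zero_mul,
    Finset.sum_ite_eq', Finset.mem_univ, ↓reduceIte]
  simp [Q, EdgeSignedGraph.M]

lemma mulVec_inr_inl (j : Fin q) :
    ((Q p q (p + q)).M *ᵥ v) (.inr (.inl j)) = -v (.inr (.inr (Fin.natAdd p j))) := by
  simp only [mulVec, dotProduct, Fintype.sum_sum_type, M_inr_inl_clique, ite_mul, neg_mul,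
    one_mul, zero_mul, Finset.sum_ite_eq', Finset.mem_univ, ↓reduceIte]
  simp [Q, EdgeSignedGraph.M]

lemma mulVec_castAdd (i : Fin p) :
    ((Q p q (p + q)).M *ᵥ v) (.inr (.inr (Fin.castAdd q i))) =
      v (.inl i) + ∑ l, v (.inr (.inr l)) - v (.inr (.inr (Fin.castAdd q i))) := by
  simp [mulVec, dotProduct, Fintype.sum_sum_type, M_clique_inl, M_clique_inr_inl,
    M_clique_clique, Fin.castAdd_ne_natAdd, Fintype.sum_ite_eq_zero_else, add_sub_assoc]

lemma mulVec_natAdd (j : Fin q) :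
    ((Q p q (p + q)).M *ᵥ v) (.inr (.inr (Fin.natAdd p j))) =
      -v (.inr (.inl j)) + ∑ l, v (.inr (.inr l)) - v (.inr (.inr (Fin.natAdd p j))) := by
  simp [mulVec, dotProduct, Fintype.sum_sum_type, M_clique_inl, M_clique_inr_inl,
    M_clique_clique, (Fin.castAdd_ne_natAdd _ _).symm, Fintype.sum_ite_eq_zero_else, add_sub_assoc]

variable {v} {t : ℝ}

lemma mul_clique_eq_of_mulVec_eq (hv : (Q p q (p + q)).M *ᵥ v = t • v) (k : Fin (p + q)) :
    (t ^ 2 + t - 1) * v (.inr (.inr k)) = t * ∑ l, v (.inr (.inr l)) := by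
  induction k using Fin.addCases with
  | left i =>
    have hpend := congrFun hv (.inl i)
    have hrow := congrFun hv (.inr (.inr (Fin.castAdd q i)))
    rw [mulVec_inl] at hpend
    rw [mulVec_castAdd] at hrow
    simp only [Pi.smul_apply, smul_eq_mul] at hpend hrow
    linear_combination (-t) * hrow - hpend
  | right j =>
    have hpend := congrFun hv (.inr (.inl j))
    have hrow := congrFun hv (.inr (.inr (Fin.natAdd p j)))
    rw [mulVec_inr_inl] at hpend
    rw [mulVec_natAdd] at hrow
    simp only [Pi.smul_apply, smul_eq_mul] at hpend hrow
    linear_combination (-t) * hrow + hpend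

theorem neg_goldenRatio_le_of_mulVec_eq (hv0 : v ≠ 0) (hv : (Q p q (p + q)).M *ᵥ v = t • v) :
    -φ ≤ t := by
  by_contra! ht
  have ht0 : t ≠ 0 := by linarith [goldenRatio_pos]
  have hquad : 0 < t ^ 2 + t - 1 := by nlinarith [goldenRatio_sq, one_lt_goldenRatio]
  have hclique : ∀ k, v (.inr (.inr k)) = 0 := congrFun <|
    eq_zero_of_forall_mul_eq_mul_sum hquad (by linarith [goldenRatio_pos])
      (mul_clique_eq_of_mulVec_eq hv)
  apply hv0
  ext (i | j | k)
  · have hpend := congrFun hv (.inl i)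
    rw [mulVec_inl, hclique, Pi.smul_apply, smul_eq_mul] at hpend
    simpa [ht0] using hpend.symm
  · have hpend := congrFun hv (.inr (.inl j))
    rw [mulVec_inr_inl, hclique, Pi.smul_apply, smul_eq_mul] at hpend
    simpa [ht0] using hpend.symm
  · exact hclique k

noncomputable def goldenVec (a : Fin p) (b : Fin q) (t : ℝ) : Fin p ⊕ Fin q ⊕ Fin (p + q) → ℝ :=
  Sum.elim (Pi.single a 1) <| Sum.elim (Pi.single b 1) <|
    Fin.addCases (Pi.single a t) (Pi.single b (-t))

theorem goldenVec_ne_zero (a : Fin p) (b : Fin q) (t : ℝ) : goldenVec a b t ≠ 0 :=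
  fun h => by simpa [goldenVec] using congrFun h (.inl a)

theorem mulVec_goldenVec (a : Fin p) (b : Fin q) (ht : t ^ 2 + t - 1 = 0) :
    (Q p q (p + q)).M *ᵥ goldenVec a b t = t • goldenVec a b t := by
  have hsum : ∑ l, goldenVec a b t (.inr (.inr l)) = 0 := by
    simp [goldenVec, Fin.sum_univ_add]
  ext (i | j | k)
  · by_cases hi : i = a <;> simp [mulVec_inl, goldenVec, hi]
  · by_cases hj : j = b <;> simp [mulVec_inr_inl, goldenVec, hj]
  · induction k using Fin.addCases with
    | left i =>
      rw [mulVec_castAdd, hsum]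
      by_cases hi : i = a
      · subst hi
        simp only [goldenVec, Sum.elim_inl, Pi.single_eq_same, add_zero, Sum.elim_inr,
          Fin.addCases_left, Pi.smul_apply, smul_eq_mul]
        linear_combination -ht
      · simp [goldenVec, hi]
    | right j =>
      rw [mulVec_natAdd, hsum]
      by_cases hj : j = b
      · subst hj
        simp only [goldenVec, Sum.elim_inr, Sum.elim_inl, Pi.single_eq_same, add_zero,
          Fin.addCases_right, sub_neg_eq_add, Pi.smul_apply, smul_eq_mul, mul_neg]
        linear_combination ht
      · simp [goldenVec, hj]

theorem minEig_eq_neg_goldenRatio (hp : 0 < p) (hq : 0 < q) :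
    minEig (Q p q (p + q)).M = -φ := by
  have hφ : (-φ) ^ 2 + -φ - 1 = 0 := by rw [neg_sq, goldenRatio_sq]; ring
  refine IsLeast.csInf_eq ⟨⟨goldenVec ⟨0, hp⟩ ⟨0, hq⟩ (-φ), goldenVec_ne_zero _ _ _,
    mulVec_goldenVec _ _ hφ⟩, ?_⟩
  rintro t ⟨v, hv0, hv⟩
  exact neg_goldenRatio_le_of_mulVec_eq hv0 hv

end Q

/-- For `r ≥ 1`, the smallest eigenvalue of the signed adjacency
matrix of `Q_{r,r,2r}` equals `−τ`, where `τ = (1+√5)/2` is the golden ratio. -/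
theorem statement8 (r : ℕ) (hr : 1 ≤ r) :
    minEig (Q r r (2 * r)).M = -((1 + Real.sqrt 5) / 2) := by
  rw [two_mul]
  exact Q.minEig_eq_neg_goldenRatio hr hr
end
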